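/- Let x, y be permutations of [n] with x(n) = y(n). Then x ⊵_R y if and only if x̂ ⊵_R ŷ, where x̂, ŷ are the projected permutations in S_{n−1}. -/

import Mathlib

/-- `o` is the outcome of running parking Algorithm A on preference vector `a`:
car `i` parks in the first unoccupied spot in `[a i, n]`, and every car parks. -/
def IsAOutcome {n : ℕ} (a o : Fin n → Fin n) : Prop :=
  Function.Injective o ∧ ∀ i, a i ≤ o i ∧
    ∀ s, a i ≤ s → s < o i → ∃ j, j < i ∧ o j = s

/-- `a` is a parking function. -/
def IsParkingFunction {n : ℕ} (a : Fin n → Fin n) : Prop :=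
  ∃ o, IsAOutcome a o

/-- `o` is the outcome of running parking Algorithm B on the pair `(a, b)`:
car `i` parks in the first unoccupied spot in `[a i, b i]`, and every car parks. -/
def IsBOutcome {n : ℕ} (a b o : Fin n → Fin n) : Prop :=
  Function.Injective o ∧ ∀ i, a i ≤ o i ∧ o i ≤ b i ∧
    ∀ s, a i ≤ s → s < o i → ∃ j, j < i ∧ o j = s

/-- `(a, b)` is an interval parking function. -/
def IsIPF {n : ℕ} (a b : Fin n → Fin n) : Prop :=
  ∃ o, IsBOutcome a b o

/-- The conjugate (reverse complement) `x*` of `x`, with `x*(i) = n + 1 - x(n + 1 - i)`. -/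
def pconj {n : ℕ} (f : Fin n → Fin n) : Fin n → Fin n :=
  fun i => (f i.rev).rev

/-- The pair `(x, y)` is reachable, `x ⊵_R y`: there is an IPF `(a, b)` with
`O(a) = x` and `O(b*) = y*`. -/
def Reaches {n : ℕ} (x y : Fin n → Fin n) : Prop :=
  ∃ a b : Fin n → Fin n, IsIPF a b ∧ IsAOutcome a x ∧ IsAOutcome (pconj b) (pconj y)

/-- Pseudoreachability `x ≥_P y`: the reflexive-transitive closure of reachability. -/
def PseudoGE {n : ℕ} (x y : Equiv.Perm (Fin n)) : Prop :=
  Relation.ReflTransGen (fun u v : Equiv.Perm (Fin n) => Reaches ⇑u ⇑v) x y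

/-- `#{k ∈ [i] : x(k) ≥ j}` (with `i`, `j` zero-indexed). -/
def bcount {n : ℕ} (x : Fin n → Fin n) (i j : Fin n) : ℕ :=
  (Finset.univ.filter (fun k : Fin n => k ≤ i ∧ j ≤ x k)).card

/-- The Bruhat order `x ≥_B y` on the symmetric group. -/
def BruhatGE {n : ℕ} (x y : Equiv.Perm (Fin n)) : Prop :=
  ∀ i j : Fin n, bcount ⇑y i j ≤ bcount ⇑x i j

/-- The number of inversions (the Coxeter length) of `f`. -/
def invCount {n : ℕ} (f : Fin n → Fin n) : ℕ :=
  (Finset.univ.filter (fun p : Fin n × Fin n => p.1 < p.2 ∧ f p.2 < f p.1)).card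

/-- The adjacent transposition `s_i` exchanging `i` and `i+1` (one-indexed),
as a permutation of `Fin n`. -/
def sgen (n : ℕ) (i : ℕ) : Equiv.Perm (Fin n) :=
  if h : 1 ≤ i ∧ i < n then Equiv.swap ⟨i - 1, by omega⟩ ⟨i, h.2⟩ else 1

/-- Left weak order: `x ≥_W y` iff `x = s_{i₁} ⋯ s_{i_k} · y` with `ℓ(x) = ℓ(y) + k`. -/
def WeakGE {n : ℕ} (x y : Equiv.Perm (Fin n)) : Prop :=
  ∃ l : List ℕ, (∀ i ∈ l, 1 ≤ i ∧ i ≤ n - 1) ∧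
    x = (l.map (sgen n)).prod * y ∧ invCount ⇑x = invCount ⇑y + l.length

/-- The projection `x ↦ x̂` deleting the last position and the value `x(n)`. -/
def hatf {n : ℕ} (x : Fin (n + 1) → Fin (n + 1)) : Fin n → Fin n :=
  fun i =>
    if h : (x i.castSucc).val < (x (Fin.last n)).val
    then ⟨(x i.castSucc).val, by have h1 := (x (Fin.last n)).isLt; omega⟩
    else ⟨(x i.castSucc).val - 1, by have h1 := (x i.castSucc).isLt; have h2 := i.isLt; omega⟩

/-- `lam n f k` is `λ_k` of the permutation of `[n]` with one-line notation `f(1), …, f(n)`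
(one-indexed): `λ_{n-1}(x) = n - x(n)` and `λ_k(x) = λ_k(x̄)` for `k ≤ n - 2`, where
`x̄ ∈ S_{n-1}` is the restriction of `u⁻¹·x` (`u = s_{x(n)} ⋯ s_{n-1}`), concretely
`x̄(i) = x(i)` if `x(i) < x(n)` and `x̄(i) = x(i) - 1` if `x(i) > x(n)`. -/
def lam : ℕ → (ℕ → ℕ) → ℕ → ℕ
  | 0, _, _ => 0
  | n + 1, f, k =>
    if k = n then (n + 1) - f (n + 1)
    else lam n (fun i => if f i < f (n + 1) then f i else f i - 1) k

/-- The one-line notation of `x`, as a one-indexed function `ℕ → ℕ`. -/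
def oneline {n : ℕ} (x : Fin n → Fin n) : ℕ → ℕ :=
  fun i => if h : i - 1 < n then (x ⟨i - 1, h⟩).val + 1 else 0

/-- `y` contains the pattern `σ`. -/
def ContainsPattern {n m : ℕ} (y : Equiv.Perm (Fin n)) (σ : Equiv.Perm (Fin m)) : Prop :=
  ∃ f : Fin m → Fin n, StrictMono f ∧ ∀ j k, y (f j) < y (f k) ↔ σ j < σ k

/-- `x` is an AR (Arndt–Riehl) permutation: `x⁻¹(i) ≤ i + 1` for all `i ∈ [n]`. -/
def IsAR {n : ℕ} (x : Equiv.Perm (Fin n)) : Prop :=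
  ∀ i : Fin n, (x.symm i).val ≤ i.val + 1

/-!
Running Algorithm A on `a` has a unique outcome, and any outcome of Algorithm B on `(a, b)` is
one, so an IPF `(a, b)` with `O(a) = x` only constrains `b` through `x ≤ b`. Read backwards,
`O(b*) = y*` says that `y ≤ b` and that every spot in `(y i, b i]` is taken by a later car of `y`.
Taking `a = x` and `b = max x y` therefore shows that `x ⊵_R y` iff every spot in `(y i, x i]` is
taken by `y` at a later position. This criterion is invariant under deleting the last position
together with the common value `p = x(n) = y(n)`, since `x` and `y` are recovered from `x̂`, `ŷ`
through the order embedding `p.succAbove` whose range misses only `p`, and `p` itself is taken by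
`y` at the last position.
-/

section

variable {n : ℕ}

theorem IsBOutcome.isAOutcome {a b o : Fin n → Fin n} (h : IsBOutcome a b o) : IsAOutcome a o :=
  ⟨h.1, fun i => ⟨(h.2 i).1, (h.2 i).2.2⟩⟩

theorem isAOutcome_self {x : Fin n → Fin n} (hx : Function.Injective x) : IsAOutcome x x :=
  ⟨hx, fun _ => ⟨le_rfl, fun _ h₁ h₂ => absurd (h₁.trans_lt h₂) (lt_irrefl _)⟩⟩

theorem isBOutcome_self_of_le {x b : Fin n → Fin n} (hx : Function.Injective x)
    (hxb : ∀ i, x i ≤ b i) : IsBOutcome x b x :=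
  ⟨hx, fun i => ⟨le_rfl, hxb i, fun _ h₁ h₂ => absurd (h₁.trans_lt h₂) (lt_irrefl _)⟩⟩

theorem IsAOutcome.not_lt_of_eqOn_lt {a o o' : Fin n → Fin n} (ho : IsAOutcome a o)
    (ho' : IsAOutcome a o') {i : Fin n} (heq : ∀ j < i, o j = o' j) : ¬ o i < o' i := by
  intro hlt
  obtain ⟨j, hji, hj⟩ := (ho'.2 i).2 (o i) (ho.2 i).1 hlt
  rw [← heq j hji] at hj
  exact hji.ne (ho.1 hj)

theorem IsAOutcome.unique {a o o' : Fin n → Fin n} (ho : IsAOutcome a o)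
    (ho' : IsAOutcome a o') : o = o' := by
  funext i
  induction i using WellFoundedLT.induction with
  | ind i ih =>
    exact le_antisymm (not_lt.1 (ho'.not_lt_of_eqOn_lt ho fun j hj => (ih j hj).symm))
      (not_lt.1 (ho.not_lt_of_eqOn_lt ho' ih))

theorem pconj_pconj (f : Fin n → Fin n) : pconj (pconj f) = f := by
  funext i
  simp [pconj]

theorem Function.Injective.pconj {f : Fin n → Fin n} (hf : Function.Injective f) :
    Function.Injective (pconj f) :=
  Fin.rev_injective.comp (hf.comp Fin.rev_injective)

theorem isAOutcome_pconj_iff {b y : Fin n → Fin n} :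
    IsAOutcome (pconj b) (pconj y) ↔ Function.Injective y ∧
      ∀ i, y i ≤ b i ∧ ∀ t, y i < t → t ≤ b i → ∃ j, i < j ∧ y j = t := by
  have hinj : Function.Injective (pconj y) ↔ Function.Injective y :=
    ⟨fun h => pconj_pconj y ▸ h.pconj, (·.pconj)⟩
  rw [IsAOutcome, hinj, ← Fin.revPerm.forall_congr_right]
  refine and_congr_right fun _ => forall_congr' fun i => ?_
  simp only [pconj, Fin.revPerm_apply, Fin.rev_rev, Fin.rev_le_rev]
  refine and_congr_right fun _ => ?_
  rw [← Fin.revPerm.forall_congr_right]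
  refine forall_congr' fun t => ?_
  simp only [Fin.revPerm_apply, Fin.rev_le_rev, Fin.rev_lt_rev, Fin.rev_inj]
  rw [imp.swap, ← Fin.revPerm.exists_congr_right]
  simp only [Fin.revPerm_apply, Fin.rev_rev, Fin.rev_lt_rev]

def ReachCriterion (x y : Fin n → Fin n) : Prop :=
  ∀ i t, y i < t → t ≤ x i → ∃ j, i < j ∧ y j = t

theorem reaches_iff_reachCriterion {x y : Fin n → Fin n} (hx : Function.Injective x)
    (hy : Function.Injective y) : Reaches x y ↔ ReachCriterion x y := by
  constructor
  · rintro ⟨a, b, ⟨o, hB⟩, hA, hC⟩ i t hyt htx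
    have hox : o = x := hB.isAOutcome.unique hA
    exact ((isAOutcome_pconj_iff.1 hC).2 i).2 t hyt (htx.trans (hox ▸ (hB.2 i).2.1))
  · intro hR
    refine ⟨x, fun i => max (x i) (y i),
      ⟨x, isBOutcome_self_of_le hx fun i => le_max_left _ _⟩, isAOutcome_self hx,
      isAOutcome_pconj_iff.2 ⟨hy, fun i => ⟨le_max_right _ _, fun t hyt htb => ?_⟩⟩⟩
    exact hR i t hyt ((le_max_iff.1 htb).resolve_right (not_le.2 hyt))

theorem succAbove_hatf {x : Fin (n + 1) → Fin (n + 1)} (hx : Function.Injective x) (i : Fin n) :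
    (x (Fin.last n)).succAbove (hatf x i) = x i.castSucc := by
  have hne : (x i.castSucc).val ≠ (x (Fin.last n)).val := fun h =>
    (Fin.castSucc_lt_last i).ne (hx (Fin.ext h))
  ext
  simp only [Fin.succAbove, hatf, Fin.lt_def, Fin.val_castSucc]
  split_ifs <;> simp only [Fin.val_castSucc, Fin.val_succ] at * <;> omega

theorem hatf_injective {x : Fin (n + 1) → Fin (n + 1)} (hx : Function.Injective x) :
    Function.Injective (hatf x) := by
  have hcomp : (x (Fin.last n)).succAbove ∘ hatf x = x ∘ Fin.castSucc :=
    funext (succAbove_hatf hx)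
  exact Function.Injective.of_comp (hcomp ▸ hx.comp (Fin.castSucc_injective n))

theorem reachCriterion_iff_hatf {x y : Fin (n + 1) → Fin (n + 1)} (hx : Function.Injective x)
    (hy : Function.Injective y) (h : x (Fin.last n) = y (Fin.last n)) :
    ReachCriterion x y ↔ ReachCriterion (hatf x) (hatf y) := by
  set p := y (Fin.last n)
  have hxp : ∀ i, p.succAbove (hatf x i) = x i.castSucc := h ▸ succAbove_hatf hx
  have hyp : ∀ i, p.succAbove (hatf y i) = y i.castSucc := succAbove_hatf hy
  constructor
  · intro hR i T hyT hTx
    obtain ⟨j, hij, hj⟩ := hR i.castSucc (p.succAbove T)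
      (hyp i ▸ Fin.succAbove_lt_succAbove_iff.2 hyT) (hxp i ▸ Fin.succAbove_le_succAbove_iff.2 hTx)
    cases j using Fin.lastCases with
    | last => exact absurd hj.symm (Fin.succAbove_ne p T)
    | cast j =>
      exact ⟨j, Fin.castSucc_lt_castSucc_iff.1 hij, Fin.succAbove_right_injective (hyp j ▸ hj)⟩
  · intro hR i t hyt htx
    cases i using Fin.lastCases with
    | last => exact absurd (hyt.trans_le (htx.trans_eq h)) (lt_irrefl _)
    | cast i =>
      by_cases htp : t = p
      · exact ⟨Fin.last n, Fin.castSucc_lt_last i, htp.symm⟩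
      obtain ⟨T, rfl⟩ := Fin.exists_succAbove_eq htp
      obtain ⟨j, hij, hj⟩ := hR i T (Fin.succAbove_lt_succAbove_iff.1 (hyp i ▸ hyt))
        (Fin.succAbove_le_succAbove_iff.1 (hxp i ▸ htx))
      exact ⟨j.castSucc, Fin.castSucc_lt_castSucc_iff.2 hij, hj ▸ (hyp j).symm⟩
end

theorem stmt9_general {n : ℕ} (x y : Equiv.Perm (Fin (n + 1)))
    (h : x (Fin.last n) = y (Fin.last n)) :
    Reaches ⇑x ⇑y ↔ Reaches (hatf ⇑x) (hatf ⇑y) := by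
  rw [reaches_iff_reachCriterion x.injective y.injective,
    reaches_iff_reachCriterion (hatf_injective x.injective) (hatf_injective y.injective)]
  exact reachCriterion_iff_hatf x.injective y.injective h

/-- Lemma `lem:proj`. For `x, y ∈ S_n` (`n ≥ 2`) with `x(n) = y(n)`:
`x ⊵_R y` iff `x̂ ⊵_R ŷ`. -/
theorem stmt9 {n : ℕ} (hn : 1 ≤ n) (x y : Equiv.Perm (Fin (n + 1)))
    (h : x (Fin.last n) = y (Fin.last n)) :
    Reaches ⇑x ⇑y ↔ Reaches (hatf ⇑x) (hatf ⇑y) :=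
  stmt9_general x y h
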